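/- arXiv:2201.04860 — 6 statements merged into one kernel-verified Lean document; each statement's English description precedes it below -/
import Mathlib

section
/- Let G be a finite group and N a normal subgroup of G such that G/N satisfies the Amit–Ashurst conjecture. Let w be a word in k variables and let g ∈ G_w be such that N_{w,G}(gn) = N_{w,G}(g) for all n ∈ N. Then N_{w,G}(g) ≥ |G|^{k−1}. -/
/-!
Count the tuples `v ∈ G^k` with `w(v) ∈ gN` in two ways. Splitting by the value `w(v) = gn`,
the hypothesis on the fibres gives `|N| · N_{w,G}(g)`. Projecting to `(G/N)^k`, where the word
map commutes with the quotient map, gives `N_{w,G/N}(gN) · |N|^k`. Hence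
`N_{w,G}(g) = N_{w,G/N}(gN) · |N|^(k-1)`, and the Amit–Ashurst bound
`N_{w,G/N}(gN) ≥ |G/N|^(k-1)` yields `N_{w,G}(g) ≥ (|G/N| · |N|)^(k-1) = |G|^(k-1)`.
-/

/-- A finite group `G` satisfies the Amit–Ashurst conjecture if
`P_{w,G}(g) ≥ 1/|G|` for every word `w` in any number of variables and every
`g` in the image of the word map. -/
def AmitAshurst (G : Type*) [Group G] : Prop :=
  ∀ (k : ℕ) (w : FreeGroup (Fin k)) (g : G),
    (∃ v : Fin k → G, (FreeGroup.lift v) w = g) →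
    (Nat.card {v : Fin k → G // (FreeGroup.lift v) w = g} : ℝ) / (Nat.card G : ℝ) ^ k
      ≥ 1 / (Nat.card G : ℝ)

theorem Nat.card_subtype_comp_eq_mul_of_card_fiber {α β : Type*} [Finite α] [Finite β]
    (f : α → β) (q : β → Prop) {m : ℕ} (hm : ∀ b, q b → Nat.card {a // f a = b} = m) :
    Nat.card {a // q (f a)} = Nat.card {b // q b} * m := by
  have := Fintype.ofFinite {b // q b}
  rw [← Nat.card_congr (Equiv.sigmaSubtypeFiberEquivSubtype f fun _ => Iff.rfl), Nat.card_sigma,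
    Finset.sum_const_nat fun b _ => hm b.1 b.2, Finset.card_univ, Nat.card_eq_fintype_card]

theorem Nat.card_comp_eq_prod_card_fiber {ι α β : Type*} [Fintype ι] (f : α → β) (u : ι → β) :
    Nat.card {v : ι → α // f ∘ v = u} = ∏ i, Nat.card {a // f a = u i} := by
  rw [Nat.card_congr ((Equiv.subtypeEquivRight fun v : ι → α => funext_iff (f := f ∘ v)).trans
    (Equiv.subtypePiEquivPi (p := fun i a => f a = u i))), Nat.card_pi]

theorem FreeGroup.lift_comp_apply {α G H : Type*} [Group G] [Group H] (f : G →* H) (v : α → G)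
    (w : FreeGroup α) : lift (f ∘ v) w = f (lift v w) :=
  (lift_unique (f.comp (lift v)) fun _ => by simp).symm

theorem QuotientGroup.card_fiber_mk {G : Type*} [Group G] (N : Subgroup G) (q : G ⧸ N) :
    Nat.card {x : G // (x : G ⧸ N) = q} = Nat.card N := by
  have h := QuotientGroup.card_preimage_mk N {q}
  rwa [Nat.card_coe_set_eq {q}, Set.ncard_singleton, mul_one] at h

section WordMap

variable {ι G : Type*} [Fintype ι] [Group G] [Finite G] (N : Subgroup G) (w : FreeGroup ι)

theorem card_wordMap_mem_coset_eq_mul (g : G)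
    (hfib : ∀ n ∈ N, Nat.card {v : ι → G // FreeGroup.lift v w = g * n}
      = Nat.card {v : ι → G // FreeGroup.lift v w = g}) :
    Nat.card {v : ι → G // (FreeGroup.lift v w : G ⧸ N) = g}
      = Nat.card N * Nat.card {v : ι → G // FreeGroup.lift v w = g} := by
  refine (Nat.card_subtype_comp_eq_mul_of_card_fiber (fun v : ι → G => FreeGroup.lift v w)
    (fun x : G => (x : G ⧸ N) = g) fun x hx => ?_).trans (by rw [QuotientGroup.card_fiber_mk])
  have hn : g⁻¹ * x ∈ N := QuotientGroup.eq.mp hx.symm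
  simpa using hfib _ hn

theorem card_wordMap_mem_coset_eq_card_quotient_mul [N.Normal] (q : G ⧸ N) :
    Nat.card {v : ι → G // (FreeGroup.lift v w : G ⧸ N) = q}
      = Nat.card {u : ι → G ⧸ N // FreeGroup.lift u w = q} * Nat.card N ^ Fintype.card ι := by
  have hnat (v : ι → G) :
      (FreeGroup.lift v w : G ⧸ N) = FreeGroup.lift (QuotientGroup.mk' N ∘ v) w :=
    (FreeGroup.lift_comp_apply (QuotientGroup.mk' N) v w).symm
  simp_rw [hnat]
  refine Nat.card_subtype_comp_eq_mul_of_card_fiber (fun v : ι → G => QuotientGroup.mk' N ∘ v)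
    (fun u : ι → G ⧸ N => FreeGroup.lift u w = q) fun u _ => ?_
  simp [Nat.card_comp_eq_prod_card_fiber, QuotientGroup.card_fiber_mk]

end WordMap

theorem AmitAshurst.card_pow_le_mul_card_fiber {Q : Type*} [Group Q] [Finite Q]
    (hQ : AmitAshurst Q) {k : ℕ} (w : FreeGroup (Fin k)) (q : Q)
    (hq : ∃ u : Fin k → Q, FreeGroup.lift u w = q) :
    Nat.card Q ^ k ≤ Nat.card Q * Nat.card {u : Fin k → Q // FreeGroup.lift u w = q} := by
  have hpos : (0 : ℝ) < Nat.card Q := by exact_mod_cast Nat.card_pos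
  have h := hQ k w q hq
  rw [ge_iff_le, div_le_div_iff₀ hpos (pow_pos hpos k)] at h
  exact_mod_cast (one_mul _).symm.trans_le (h.trans_eq (mul_comm _ _))

/-- If `N ⊴ G` is such that `G/N` satisfies the Amit–Ashurst
conjecture, `w` is a word in `k` variables and `g ∈ G_w` is such that
`N_{w,G}(gn) = N_{w,G}(g)` for all `n ∈ N`, then `N_{w,G}(g) ≥ |G|^(k-1)`. -/
theorem Nw_ge_of_quotient_amitAshurst
    {G : Type*} [Group G] [Finite G] (N : Subgroup G) [N.Normal]
    (hAA : AmitAshurst (G ⧸ N))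
    (k : ℕ) (w : FreeGroup (Fin k)) (g : G)
    (hg : ∃ v : Fin k → G, (FreeGroup.lift v) w = g)
    (hfib : ∀ n ∈ N,
      Nat.card {v : Fin k → G // (FreeGroup.lift v) w = g * n}
        = Nat.card {v : Fin k → G // (FreeGroup.lift v) w = g}) :
    Nat.card {v : Fin k → G // (FreeGroup.lift v) w = g} ≥ Nat.card G ^ (k - 1) := by
  obtain ⟨v, hv⟩ := hg
  have hcount := (card_wordMap_mem_coset_eq_mul N w g hfib).symm.trans
    (card_wordMap_mem_coset_eq_card_quotient_mul N w g)
  have hquot := hAA.card_pow_le_mul_card_fiber w (g : G ⧸ N)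
    ⟨QuotientGroup.mk' N ∘ v, by rw [FreeGroup.lift_comp_apply, hv]; rfl⟩
  rw [Fintype.card_fin] at hcount
  rw [Subgroup.card_eq_card_quotient_mul_card_subgroup N]
  obtain _ | j := k
  · exact Nat.card_pos_iff.mpr ⟨⟨⟨v, hv⟩⟩, inferInstance⟩
  have hN : 0 < Nat.card N := Nat.card_pos
  have hfiber : Nat.card {v : Fin (j + 1) → G // FreeGroup.lift v w = g}
      = Nat.card {u : Fin (j + 1) → G ⧸ N // FreeGroup.lift u w = g} * Nat.card N ^ j :=
    Nat.eq_of_mul_eq_mul_left hN (by rw [hcount, pow_succ]; ring)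
  have hbound : Nat.card (G ⧸ N) ^ j
      ≤ Nat.card {u : Fin (j + 1) → G ⧸ N // FreeGroup.lift u w = g} :=
    Nat.le_of_mul_le_mul_left (by rwa [← pow_succ']) Nat.card_pos
  rw [hfiber, Nat.add_sub_cancel, mul_pow]
  exact Nat.mul_le_mul_right _ hbound
end

section
/- Let p be a prime and let G be a finite p-group with G = AB, where A is a normal cyclic subgroup of G, B is a cyclic subgroup of G, and b^p ∈ A for all b ∈ B. Then for every word w, either G_w = G or G_w ⊆ A. -/
/-- Let `G` be a finite `p`-group with `G = AB` where `A` is a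
normal cyclic subgroup, `B` is a cyclic subgroup and `b^p ∈ A` for all `b ∈ B`.
Then for every word `w`, either `G_w = G` or `G_w ⊆ A`. -/
theorem image_eq_top_or_subset_of_metacyclic
    {p : ℕ} (hp : p.Prime) {G : Type*} [Group G] [Finite G] (hG : IsPGroup p G)
    (A B : Subgroup G) [A.Normal] (hAcyc : IsCyclic ↥A) (hBcyc : IsCyclic ↥B)
    (hAB : ∀ g : G, ∃ a ∈ A, ∃ b ∈ B, g = a * b)
    (hBp : ∀ b ∈ B, b ^ p ∈ A)
    (k : ℕ) (w : FreeGroup (Fin k)) :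
    (∀ g : G, ∃ v : Fin k → G, (FreeGroup.lift v) w = g) ∨
      (∀ g : G, (∃ v : Fin k → G, (FreeGroup.lift v) w = g) → g ∈ A) := by
  classical
  haveI : Fact p.Prime := ⟨hp⟩
  -- the exponent-vector homomorphism
  let E : FreeGroup (Fin k) →* Multiplicative (Fin k → ℤ) :=
    FreeGroup.lift (fun j => Multiplicative.ofAdd (Pi.single j (1:ℤ)))
  -- exponent sum of variable `j` in `w`
  let e : Fin k → ℤ := fun j => Multiplicative.toAdd (E w) j
  by_cases hdvd : ∀ i, (p : ℤ) ∣ e i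
  · -- all exponent sums divisible by p : image lies in A
    right
    rintro g ⟨v, rfl⟩
    -- work in the quotient G/A
    let π : G →* G ⧸ A := QuotientGroup.mk' A
    refine (QuotientGroup.eq_one_iff _).mp (?_ : π (FreeGroup.lift v w) = 1)
    have hcomp : π.comp (FreeGroup.lift v) = FreeGroup.lift (fun j => π (v j)) := by
      apply FreeGroup.ext_hom; intro a; simp
    have hπ : π (FreeGroup.lift v w) = FreeGroup.lift (fun j => π (v j)) w := by
      rw [← hcomp]; rfl
    -- a generator of B
    obtain ⟨c, hc⟩ := hBcyc.exists_generator
    set t : G ⧸ A := π (c : G) with ht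
    -- every element of G/A is a power of t
    have hgen : ∀ x : G, ∃ m : ℤ, π x = t ^ m := by
      intro x
      obtain ⟨a, ha, b, hb, rfl⟩ := hAB x
      obtain ⟨m, hm⟩ := hc ⟨b, hb⟩
      refine ⟨m, ?_⟩
      have hπa : π a = 1 := (QuotientGroup.eq_one_iff a).mpr ha
      have hb' : b = (c : G) ^ m := by
        have := congrArg (Subtype.val) hm
        simpa using this.symm
      simp [map_mul, hπa, hb', map_zpow, ht]
    have htp : t ^ (p : ℤ) = 1 := by
      have : ((c : G)) ^ p ∈ A := hBp _ c.2
      have : π ((c : G) ^ p) = 1 := (QuotientGroup.eq_one_iff _).mpr this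
      simpa [map_pow, zpow_natCast, ht] using this
    -- pick exponents for the images of the v j
    choose m hm using fun j => hgen (v j)
    -- the dot-product homomorphism
    let dot : (Fin k → ℤ) →+ ℤ :=
      AddMonoidHom.mk' (fun x => ∑ j, m j * x j) (by
        intro a b
        simp [mul_add, Finset.sum_add_distrib])
    let F : FreeGroup (Fin k) →* G ⧸ A :=
      (zpowersHom (G ⧸ A) t).comp ((AddMonoidHom.toMultiplicative dot).comp E)
    have hFeq : FreeGroup.lift (fun j => π (v j)) = F := by
      apply FreeGroup.ext_hom
      intro a
      have : dot (Pi.single a (1:ℤ)) = m a := by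
        simp [dot, Pi.single_apply, mul_ite, Finset.sum_ite_eq]
      simp [F, E, zpowersHom_apply, this, hm a]
    have hval : FreeGroup.lift (fun j => π (v j)) w = t ^ (dot (Multiplicative.toAdd (E w))) := by
      rw [hFeq]; rfl
    -- p divides the exponent
    have hpd : (p : ℤ) ∣ dot (Multiplicative.toAdd (E w)) := by
      have : dot (Multiplicative.toAdd (E w)) = ∑ j, m j * e j := rfl
      rw [this]
      exact Finset.dvd_sum fun j _ => (hdvd j).mul_left (m j)
    obtain ⟨q, hq⟩ := hpd
    rw [hπ, hval, hq, zpow_mul, htp, one_zpow]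
  · -- some exponent sum coprime to p : word map is surjective
    left
    push_neg at hdvd
    obtain ⟨i, hi⟩ := hdvd
    intro g
    obtain ⟨n, hn⟩ := (IsPGroup.iff_card (p := p) (G := G)).mp hG
    have hg1 : g ^ ((p : ℤ) ^ n) = 1 := by
      have : g ^ (Nat.card G) = 1 := by
        have := orderOf_dvd_natCard g
        exact orderOf_dvd_iff_pow_eq_one.mp this
      rw [hn] at this
      have : g ^ (((p ^ n : ℕ) : ℤ)) = 1 := by
        rw [zpow_natCast]; exact this
      simpa using this
    -- Bezout
    have hpz : Prime (p : ℤ) := Nat.prime_iff_prime_int.mp hp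
    have hcop : IsCoprime ((p : ℤ) ^ n) (e i) :=
      ((hpz.coprime_iff_not_dvd).mpr hi).pow_left
    obtain ⟨x, y, hxy⟩ := hcop
    -- the witness
    refine ⟨fun j => if j = i then g ^ y else 1, ?_⟩
    -- lift of the indicator substitution gives `(g^y) ^ (e i)`
    let F : FreeGroup (Fin k) →* G :=
      (zpowersHom G (g ^ y)).comp
        ((AddMonoidHom.toMultiplicative (Pi.evalAddMonoidHom (fun _ => ℤ) i)).comp E)
    have hFeq : FreeGroup.lift (fun j => if j = i then g ^ y else 1) = F := by
      apply FreeGroup.ext_hom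
      intro a
      simp [F, E, zpowersHom_apply, Pi.single_apply, eq_comm]
    rw [hFeq]
    show (g ^ y) ^ (e i) = g
    rw [← zpow_mul]
    have h1 : y * e i = 1 - x * (p : ℤ) ^ n := by linarith [hxy]
    rw [h1, zpow_sub, zpow_one, zpow_mul']
    rw [hg1]
    simp
end

section
/- Let p be a prime and let G be a finite p-group with G = AB, where A is a nontrivial normal cyclic subgroup of G and B is a cyclic subgroup of G. Let Z be the unique subgroup of order p of A. Suppose that A ∩ B ≤ Z and that G/Z satisfies the Amit–Ashurst conjecture. Then for any word w such that G_w ⊆ A and G_w is not contained in Z, one has Z ⊊ G_w and P_{w,G}(g) ≥ 1/|G| for all g ∈ G_w. -/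
theorem one_div_le_div_pow_iff {n N k : ℕ} (hn : 0 < n) :
    (N : ℝ) / n ^ k ≥ 1 / n ↔ n ^ k ≤ N * n := by
  rw [ge_iff_le, div_le_div_iff₀ (by positivity) (by positivity), one_mul]
  exact_mod_cast Iff.rfl

open FreeGroup (lift)

section WordMap

variable {G : Type*} [Group G] {k : ℕ} (w : FreeGroup (Fin k))

noncomputable def wordFiberCard (g : G) : ℕ := Nat.card {v : Fin k → G // lift v w = g}

theorem wordFiberCard_pos_iff [Finite G] {g : G} :
    0 < wordFiberCard w g ↔ ∃ v : Fin k → G, lift v w = g :=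
  Finite.card_pos_iff.trans nonempty_subtype

theorem mk_lift_eq_lift_mk (Z : Subgroup G) [Z.Normal] (v : Fin k → G) :
    ((lift v w : G) : G ⧸ Z) = lift (fun i => (v i : G ⧸ Z)) w :=
  FreeGroup.lift_unique ((QuotientGroup.mk' Z).comp (lift v)) (by simp)

variable (A : Subgroup G)

def wordValuesOnCoset (v : Fin k → G) : Set G :=
  Set.range fun a : Fin k → A => lift (fun i => v i * a i) w

def wordDiff (v : Fin k → G) (a : Fin k → A) : G :=
  (lift v w)⁻¹ * lift (fun i => v i * a i) w

theorem wordDiff_mem [A.Normal] (v : Fin k → G) (a : Fin k → A) : wordDiff w A v a ∈ A := by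
  rw [wordDiff, ← QuotientGroup.eq, mk_lift_eq_lift_mk, mk_lift_eq_lift_mk]
  congr 2 with i
  exact (QuotientGroup.mk_mul_of_mem _ (a i).2).symm

theorem wordDiff_mul [A.Normal] [IsMulCommutative A] (v : Fin k → G) (a b : Fin k → A) :
    wordDiff w A v (a * b) = wordDiff w A v a * wordDiff w A v b := by
  induction w using FreeGroup.induction_on with
  | C1 => simp [wordDiff]
  | of x => simp [wordDiff]
  | inv_of x _ =>
    have hcomm := setLike_mul_comm (‹A.Normal›.conj_mem _ (inv_mem (b x).2) (v x))
      (‹A.Normal›.conj_mem _ (inv_mem (a x).2) (v x))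
    simp only [wordDiff, map_inv, FreeGroup.lift_apply_of, Pi.mul_apply, Subgroup.coe_mul]
    calc _ = v x * (↑(b x))⁻¹ * (v x)⁻¹ * (v x * (↑(a x))⁻¹ * (v x)⁻¹) := by group
      _ = _ := by rw [hcomm]; group
  | mul u u' hu hu' =>
    have cocycle (W W' X X' : G) :
        (W * W')⁻¹ * (X * X') = W'⁻¹ * (W⁻¹ * X) * W' * (W'⁻¹ * X') := by group
    have hcomm := setLike_mul_comm
      (‹A.Normal›.conj_mem' _ (wordDiff_mem u A v b) (lift v u')) (wordDiff_mem u' A v a)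
    simp only [wordDiff, map_mul, cocycle] at hu hu' hcomm ⊢
    rw [hu, hu']
    generalize (lift v u)⁻¹ * lift (fun i => v i * b i) u = Db at *
    generalize (lift v u')⁻¹ * lift (fun i => v i * a i) u' = Da' at *
    generalize lift v u' = W' at *
    calc _ = W'⁻¹ * ((lift v u)⁻¹ * lift (fun i => v i * a i) u) * W' *
          ((W'⁻¹ * Db * W') * Da') * (W'⁻¹ * lift (fun i => v i * b i) u') := by group
      _ = _ := by rw [hcomm]; group

def wordDiffHom [A.Normal] [IsMulCommutative A] (v : Fin k → G) : (Fin k → A) →* G where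
  toFun := wordDiff w A v
  map_one' := by simp [wordDiff]
  map_mul' := wordDiff_mul w A v

variable {A}

theorem mem_wordValuesOnCoset_iff [A.Normal] [IsMulCommutative A] {v : Fin k → G} {g : G} :
    g ∈ wordValuesOnCoset w A v ↔ (lift v w)⁻¹ * g ∈ (wordDiffHom w A v).range := by
  simp [wordValuesOnCoset, wordDiffHom, wordDiff]

theorem card_coset_fiber_eq [Finite G] [A.Normal] [IsMulCommutative A] {v : Fin k → G}
    {g g' : G}
    (hg : g ∈ wordValuesOnCoset w A v) (hg' : g' ∈ wordValuesOnCoset w A v) :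
    Nat.card {a : Fin k → A // lift (fun i => v i * a i) w = g} =
      Nat.card {a : Fin k → A // lift (fun i => v i * a i) w = g'} := by
  obtain ⟨a, rfl⟩ := hg
  obtain ⟨a', rfl⟩ := hg'
  have e (a : Fin k → A) :
      {b : Fin k → A // lift (fun i => v i * b i) w = lift (fun i => v i * a i) w} ≃
        wordDiffHom w A v ⁻¹' {wordDiffHom w A v a} :=
    Equiv.subtypeEquivRight fun b => (mul_right_inj _).symm
  exact Nat.card_congr (((e a).trans ((wordDiffHom w A v).fiberEquiv a a')).trans (e a').symm)

theorem wordFiberCard_mul_card_pi [Fintype G] (g : G) :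
    wordFiberCard w g * Nat.card (Fin k → A) =
      ∑ v : Fin k → G, Nat.card {a : Fin k → A // lift (fun i => v i * a i) w = g} := by
  let e : {v : Fin k → G // lift v w = g} × (Fin k → A) ≃
      {p : (Fin k → G) × (Fin k → A) // lift (fun i => p.1 i * p.2 i) w = g} :=
    { toFun := fun q => ⟨(fun i => q.1.1 i * (q.2 i : G)⁻¹, q.2), by simpa using q.1.2⟩
      invFun := fun p => (⟨fun i => p.1.1 i * p.1.2 i, p.2⟩, p.1.2)
      left_inv := fun q => by ext <;> simp
      right_inv := fun p => by ext <;> simp }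
  rw [wordFiberCard, ← Nat.card_prod, Nat.card_congr e, ← Nat.card_sigma]
  exact Nat.card_congr (Equiv.subtypeProdEquivSigmaSubtype
    fun (v : Fin k → G) (a : Fin k → A) => lift (fun i => v i * a i) w = g)

theorem wordFiberCard_le_of_forall_mem_imp [Finite G] [A.Normal] [IsMulCommutative A]
    {g g' : G}
    (h : ∀ v, g ∈ wordValuesOnCoset w A v → g' ∈ wordValuesOnCoset w A v) :
    wordFiberCard w g ≤ wordFiberCard w g' := by
  have := Fintype.ofFinite G
  refine Nat.le_of_mul_le_mul_right ?_ (Nat.card_pos (α := Fin k → A))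
  rw [wordFiberCard_mul_card_pi, wordFiberCard_mul_card_pi]
  refine Finset.sum_le_sum fun v _ => ?_
  by_cases hg : g ∈ wordValuesOnCoset w A v
  · exact (card_coset_fiber_eq w hg (h v hg)).le
  · have : IsEmpty {a : Fin k → A // lift (fun i => v i * a i) w = g} :=
      ⟨fun a => hg ⟨a.1, a.2⟩⟩
    simp

end WordMap

section Quotient

variable {G : Type*} [Group G] {k : ℕ} (w : FreeGroup (Fin k)) (Z : Subgroup G)

theorem card_pi_mk_eq (u : Fin k → G ⧸ Z) :
    Nat.card {v : Fin k → G // ∀ i, (v i : G ⧸ Z) = u i} = Nat.card Z ^ k := by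
  have hfiber (q : G ⧸ Z) : Nat.card {x : G // (x : G ⧸ Z) = q} = Nat.card Z := by
    have h := QuotientGroup.card_preimage_mk Z {q}
    rwa [Nat.card_unique (α := ({q} : Set (G ⧸ Z))), mul_one] at h
  rw [Nat.card_congr (Equiv.subtypePiEquivPi (p := fun i (x : G) => (x : G ⧸ Z) = u i)),
    Nat.card_pi]
  simp [hfiber]

variable [Finite G]

theorem card_mk_lift_eq_sum [Fintype Z] (g : G) :
    Nat.card {v : Fin k → G // ((lift v w : G) : G ⧸ Z) = g} =
      ∑ z : Z, wordFiberCard w (g * z) := by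
  let e : {v : Fin k → G // ((lift v w : G) : G ⧸ Z) = g} ≃
      Σ z : Z, {v : Fin k → G // lift v w = g * z} :=
    { toFun := fun v => ⟨⟨g⁻¹ * lift v.1 w, QuotientGroup.eq.mp v.2.symm⟩, ⟨v.1, by simp⟩⟩
      invFun := fun s => ⟨s.2.1, by rw [s.2.2, QuotientGroup.mk_mul_of_mem _ s.1.2]⟩
      left_inv := fun v => rfl
      right_inv := by
        rintro ⟨z, v, hv⟩
        exact Sigma.subtype_ext (Subtype.ext (by simp [hv])) rfl }
  rw [Nat.card_congr e, Nat.card_sigma]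
  rfl

variable [Z.Normal]

theorem card_mk_lift_eq (q : G ⧸ Z) :
    Nat.card {v : Fin k → G // ((lift v w : G) : G ⧸ Z) = q} =
      wordFiberCard w q * Nat.card Z ^ k := by
  have := Fintype.ofFinite (G ⧸ Z)
  classical
  let e : {v : Fin k → G // ((lift v w : G) : G ⧸ Z) = q} ≃
      Σ u : {u : Fin k → G ⧸ Z // lift u w = q},
        {v : Fin k → G // ∀ i, (v i : G ⧸ Z) = u.1 i} :=
    { toFun := fun v =>
        ⟨⟨fun i => v.1 i, by rw [← mk_lift_eq_lift_mk]; exact v.2⟩, ⟨v.1, fun i => rfl⟩⟩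
      invFun := fun s => ⟨s.2.1, by
        rw [mk_lift_eq_lift_mk]; exact (congrArg (fun u => lift u w) (funext s.2.2)).trans s.1.2⟩
      left_inv := fun v => rfl
      right_inv := by
        rintro ⟨⟨u, hu⟩, v, hv⟩
        obtain rfl : (fun i => (v i : G ⧸ Z)) = u := funext hv
        rfl }
  rw [Nat.card_congr e, Nat.card_sigma]
  simp [card_pi_mk_eq, wordFiberCard, Nat.card_eq_fintype_card]

theorem pow_card_le_wordFiberCard_mul_card (hAA : AmitAshurst (G ⧸ Z)) {g : G}
    (hg : ∃ v : Fin k → G, lift v w = g)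
    (hconst : ∀ z ∈ Z, wordFiberCard w (g * z) = wordFiberCard w g) :
    Nat.card G ^ k ≤ wordFiberCard w g * Nat.card G := by
  have hq : ∃ u : Fin k → G ⧸ Z, lift u w = (g : G ⧸ Z) :=
    let ⟨v, hv⟩ := hg
    ⟨fun i => v i, by rw [← mk_lift_eq_lift_mk, hv]⟩
  have hquot : Nat.card (G ⧸ Z) ^ k ≤ wordFiberCard w (g : G ⧸ Z) * Nat.card (G ⧸ Z) :=
    (one_div_le_div_pow_iff Nat.card_pos).mp (hAA k w _ hq)
  have hfiber :
      wordFiberCard w (g : G ⧸ Z) * Nat.card Z ^ k = Nat.card Z * wordFiberCard w g := by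
    have := Fintype.ofFinite Z
    rw [← card_mk_lift_eq, card_mk_lift_eq_sum,
      Finset.sum_congr rfl fun (z : Z) _ => hconst z z.2]
    simp [Nat.card_eq_fintype_card]
  calc Nat.card G ^ k = Nat.card (G ⧸ Z) ^ k * Nat.card Z ^ k := by
        rw [Subgroup.card_eq_card_quotient_mul_card_subgroup Z, mul_pow]
    _ ≤ wordFiberCard w (g : G ⧸ Z) * Nat.card (G ⧸ Z) * Nat.card Z ^ k := by gcongr
    _ = wordFiberCard w g * Nat.card G := by
        rw [mul_right_comm, hfiber, Subgroup.card_eq_card_quotient_mul_card_subgroup Z]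
        ring

end Quotient

theorem IsPGroup.le_of_le_of_ne_bot {p : ℕ} (hp : p.Prime) {G : Type*} [Group G] [Finite G]
    (hG : IsPGroup p G) {A Z H : Subgroup G} (hZ : ∀ Z' ≤ A, Nat.card Z' = p → Z' = Z)
    (hHA : H ≤ A) (hH : H ≠ ⊥) : Z ≤ H := by
  have := Fact.mk hp
  have hdvd : p ∣ Nat.card H :=
    (hG.to_subgroup H).card_eq_or_dvd.resolve_left (Subgroup.card_eq_one.not.mpr hH)
  obtain ⟨y, hy⟩ := exists_prime_orderOf_dvd_card' p hdvd
  have hyZ : Subgroup.zpowers (y : G) = Z :=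
    hZ _ (Subgroup.zpowers_le.mpr (hHA y.2))
      (by rw [Nat.card_zpowers, Subgroup.orderOf_coe, hy])
  exact hyZ ▸ Subgroup.zpowers_le.mpr y.2

section Cosets

variable {G : Type*} [Group G] {k : ℕ} (w : FreeGroup (Fin k)) {A : Subgroup G} [A.Normal]

theorem exists_mem_wordValuesOnCoset {B Z : Subgroup G}
    (hAB : ∀ g : G, ∃ a ∈ A, ∃ b ∈ B, g = a * b)
    (hwA : ∀ g : G, (∃ v : Fin k → G, lift v w = g) → g ∈ A) (hABZ : A ⊓ B ≤ Z)
    (v : Fin k → G) : ∃ z ∈ Z, z ∈ wordValuesOnCoset w A v := by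
  choose a ha b hb hv using fun i => hAB (v i)
  have hbB : lift b w ∈ B := FreeGroup.range_lift_le (Set.range_subset_iff.mpr hb) ⟨w, rfl⟩
  refine ⟨lift b w, hABZ ⟨hwA _ ⟨b, rfl⟩, hbB⟩,
    fun i => ⟨(b i)⁻¹ * (a i)⁻¹ * b i, ‹A.Normal›.conj_mem' _ (inv_mem (ha i)) _⟩, ?_⟩
  refine congrArg (lift · w) (funext fun i => ?_)
  show v i * ((b i)⁻¹ * (a i)⁻¹ * b i) = b i
  rw [hv i]
  group

variable [IsMulCommutative A] {Z : Subgroup G}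

theorem wordValuesOnCoset_subset_or_saturated {p : ℕ} (hp : p.Prime) [Finite G]
    (hG : IsPGroup p G) (hZ : ∀ Z' ≤ A, Nat.card Z' = p → Z' = Z) {v : Fin k → G}
    (hvZ : ∃ z ∈ Z, z ∈ wordValuesOnCoset w A v) :
    wordValuesOnCoset w A v ⊆ Z ∨ ((Z : Set G) ⊆ wordValuesOnCoset w A v ∧
      ∀ g ∈ wordValuesOnCoset w A v, ∀ z ∈ Z, g * z ∈ wordValuesOnCoset w A v) := by
  obtain ⟨z₀, hz₀Z, hz₀⟩ := hvZ
  rcases eq_or_ne (wordDiffHom w A v).range ⊥ with hR | hR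
  · left
    intro g hg
    rw [mem_wordValuesOnCoset_iff, hR, Subgroup.mem_bot, inv_mul_eq_one] at hg hz₀
    exact hg ▸ hz₀ ▸ hz₀Z
  · have hRA : (wordDiffHom w A v).range ≤ A := by
      rintro _ ⟨a, rfl⟩
      exact wordDiff_mem w A v a
    have hZR := hG.le_of_le_of_ne_bot hp hZ hRA hR
    have hsat (g : G) (hg : g ∈ wordValuesOnCoset w A v) (z : G) (hz : z ∈ Z) :
        g * z ∈ wordValuesOnCoset w A v := by
      rw [mem_wordValuesOnCoset_iff, ← mul_assoc] at *
      exact mul_mem hg (hZR hz)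
    refine .inr ⟨fun z hz => ?_, hsat⟩
    simpa using hsat z₀ hz₀ (z₀⁻¹ * z) (mul_mem (inv_mem hz₀Z) hz)

variable [Finite G]
  (hS : ∀ v, wordValuesOnCoset w A v ⊆ Z ∨ ((Z : Set G) ⊆ wordValuesOnCoset w A v ∧
    ∀ g ∈ wordValuesOnCoset w A v, ∀ z ∈ Z, g * z ∈ wordValuesOnCoset w A v))
include hS

theorem wordFiberCard_mul_eq {g z : G} (hg : g ∉ Z) (hz : z ∈ Z) :
    wordFiberCard w (g * z) = wordFiberCard w g := by
  have hgz : g * z ∉ Z := fun h => hg (by simpa using mul_mem h (inv_mem hz))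
  refine le_antisymm (wordFiberCard_le_of_forall_mem_imp w (A := A) fun v hv => ?_)
    (wordFiberCard_le_of_forall_mem_imp w (A := A) fun v hv => ?_)
  · obtain hsub | ⟨-, hsat⟩ := hS v
    · exact absurd (hsub hv) hgz
    · simpa using hsat _ hv _ (inv_mem hz)
  · obtain hsub | ⟨-, hsat⟩ := hS v
    · exact absurd (hsub hv) hg
    · exact hsat _ hv _ hz

theorem wordFiberCard_le_of_mem {g z : G} (hg : g ∉ Z) (hz : z ∈ Z) :
    wordFiberCard w g ≤ wordFiberCard w z :=
  wordFiberCard_le_of_forall_mem_imp w (A := A) fun v hv =>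
    (hS v).elim (fun hsub => absurd (hsub hv) hg) fun h => h.1 hz

end Cosets

theorem amit_ashurst_of_intersection_in_Z_general
    {p : ℕ} (hp : p.Prime) {G : Type*} [Group G] [Finite G] (hG : IsPGroup p G)
    (A B Z : Subgroup G) [A.Normal] (hAcyc : IsCyclic ↥A)
    (hAB : ∀ g : G, ∃ a ∈ A, ∃ b ∈ B, g = a * b)
    [Z.Normal]
    (hZuniq : ∀ Z' : Subgroup G, Z' ≤ A → Nat.card Z' = p → Z' = Z)
    (hABZ : A ⊓ B ≤ Z)
    (hAA : AmitAshurst (G ⧸ Z))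
    (k : ℕ) (w : FreeGroup (Fin k))
    (hwA : ∀ g : G, (∃ v : Fin k → G, (FreeGroup.lift v) w = g) → g ∈ A)
    (hwZ : ¬ ∀ g : G, (∃ v : Fin k → G, (FreeGroup.lift v) w = g) → g ∈ Z) :
    (Z : Set G) ⊂ {g : G | ∃ v : Fin k → G, (FreeGroup.lift v) w = g} ∧
      ∀ g : G, (∃ v : Fin k → G, (FreeGroup.lift v) w = g) →
        (Nat.card {v : Fin k → G // (FreeGroup.lift v) w = g} : ℝ) / (Nat.card G : ℝ) ^ k
          ≥ 1 / (Nat.card G : ℝ) := by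
  have : IsMulCommutative A := by
    let := hAcyc.commGroup
    infer_instance
  push Not at hwZ
  obtain ⟨g₀, hg₀, hg₀Z⟩ := hwZ
  have hS := fun v => wordValuesOnCoset_subset_or_saturated w hp hG hZuniq
    (exists_mem_wordValuesOnCoset w hAB hwA hABZ v)
  have hbound (g : G) (hg : ∃ v : Fin k → G, lift v w = g) (hgZ : g ∉ Z) :
      Nat.card G ^ k ≤ wordFiberCard w g * Nat.card G :=
    pow_card_le_wordFiberCard_mul_card w Z hAA hg fun z hz => wordFiberCard_mul_eq w hS hgZ hz
  refine ⟨⟨fun z hz => ?_, fun h => hg₀Z (h hg₀)⟩, fun g hg => ?_⟩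
  · exact (wordFiberCard_pos_iff w).mp <| ((wordFiberCard_pos_iff w).mpr hg₀).trans_le
      (wordFiberCard_le_of_mem w hS hg₀Z hz)
  · refine (one_div_le_div_pow_iff Nat.card_pos).mpr ?_
    by_cases hgZ : g ∈ Z
    · exact (hbound g₀ hg₀ hg₀Z).trans
        (Nat.mul_le_mul_right _ (wordFiberCard_le_of_mem w hS hg₀Z hgZ))
    · exact hbound g hg hgZ

/-- Let `G` be a finite `p`-group with `G = AB`, where `A` is a
nontrivial normal cyclic subgroup and `B` a cyclic subgroup, and let `Z` be the
unique subgroup of order `p` of `A`. Suppose `A ∩ B ≤ Z` and `G/Z` satisfies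
the Amit–Ashurst conjecture. Then for any word `w` with `G_w ⊆ A` and
`G_w ⊄ Z`, one has `Z ⊊ G_w` and `P_{w,G}(g) ≥ 1/|G|` for all `g ∈ G_w`. -/
theorem amit_ashurst_of_intersection_in_Z
    {p : ℕ} (hp : p.Prime) {G : Type*} [Group G] [Finite G] (hG : IsPGroup p G)
    (A B Z : Subgroup G) [A.Normal] (hAcyc : IsCyclic ↥A) (hBcyc : IsCyclic ↥B)
    (hAne : A ≠ ⊥)
    (hAB : ∀ g : G, ∃ a ∈ A, ∃ b ∈ B, g = a * b)
    [Z.Normal] (hZA : Z ≤ A) (hZcard : Nat.card Z = p)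
    (hZuniq : ∀ Z' : Subgroup G, Z' ≤ A → Nat.card Z' = p → Z' = Z)
    (hABZ : A ⊓ B ≤ Z)
    (hAA : AmitAshurst (G ⧸ Z))
    (k : ℕ) (w : FreeGroup (Fin k))
    (hwA : ∀ g : G, (∃ v : Fin k → G, (FreeGroup.lift v) w = g) → g ∈ A)
    (hwZ : ¬ ∀ g : G, (∃ v : Fin k → G, (FreeGroup.lift v) w = g) → g ∈ Z) :
    (Z : Set G) ⊂ {g : G | ∃ v : Fin k → G, (FreeGroup.lift v) w = g} ∧
      ∀ g : G, (∃ v : Fin k → G, (FreeGroup.lift v) w = g) →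
        (Nat.card {v : Fin k → G // (FreeGroup.lift v) w = g} : ℝ) / (Nat.card G : ℝ) ^ k
          ≥ 1 / (Nat.card G : ℝ) :=
  amit_ashurst_of_intersection_in_Z_general hp hG A B Z hAcyc hAB hZuniq hABZ hAA k w hwA hwZ
end

section
/- Let G be a group and a, b ∈ G with b a b^{-1} = a^r for some integer r. Then for every ℓ ≥ 3, all integers α_1,…,α_ℓ and all natural numbers β_1,…,β_ℓ, the left-normed commutator satisfies [a^{α_1} b^{β_1}, a^{α_2} b^{β_2}, …, a^{α_ℓ} b^{β_ℓ}] = a^{(α_1(1 − r^{β_2}) − α_2(1 − r^{β_1}))·(1 − r^{β_3})⋯(1 − r^{β_ℓ})}. -/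
open scoped commutatorElement

/-- The left-normed commutator `[x₁, x₂, …, x_ℓ] = [[x₁, …, x_{ℓ-1}], x_ℓ]`,
with the conventions that the empty list gives `1` and a singleton gives its
entry. -/
def leftNormedCommutator {G : Type*} [Group G] : List G → G
  | [] => 1
  | x :: xs => xs.foldl (fun acc y => ⁅acc, y⁆) x

section

variable {G : Type*} [Group G]

theorem leftNormedCommutator_append_singleton {xs : List G} (hxs : xs ≠ []) (y : G) :
    leftNormedCommutator (xs ++ [y]) = ⁅leftNormedCommutator xs, y⁆ := by
  cases xs with
  | nil => contradiction
  | cons x xs => simp [leftNormedCommutator]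

variable {a b : G} {r : ℤ}

theorem pow_mul_zpow_of_conj_eq_zpow (h : b * a * b⁻¹ = a ^ r) (n : ℕ) (k : ℤ) :
    b ^ n * a ^ k = a ^ (k * r ^ n) * b ^ n := by
  have hb : ∀ k : ℤ, b * a ^ k = a ^ (k * r) * b := fun k => by
    rw [mul_comm, zpow_mul, ← h, conj_zpow]; group
  induction n generalizing k with
  | zero => simp
  | succ n ih =>
    rw [pow_succ', mul_assoc, ih, ← mul_assoc, hb, mul_assoc, ← pow_succ', mul_assoc k,
      ← pow_succ]

theorem zpow_mul_pow_mul_zpow_mul_pow (h : b * a * b⁻¹ = a ^ r) (α γ : ℤ) (β δ : ℕ) :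
    a ^ α * b ^ β * (a ^ γ * b ^ δ) = a ^ (α + γ * r ^ β) * b ^ (β + δ) := by
  rw [mul_assoc, ← mul_assoc (b ^ β), pow_mul_zpow_of_conj_eq_zpow h, zpow_add, pow_add]
  group

/-- In the semidirect-product normal form both `x * y` and `y * x` end in `b ^ (β + δ)`, so
`⁅x, y⁆ = (x * y) * (y * x)⁻¹` is a power of `a`. -/
theorem commutatorElement_zpow_mul_pow (h : b * a * b⁻¹ = a ^ r) (α γ : ℤ) (β δ : ℕ) :
    ⁅a ^ α * b ^ β, a ^ γ * b ^ δ⁆ = a ^ (α * (1 - r ^ δ) - γ * (1 - r ^ β)) := by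
  calc ⁅a ^ α * b ^ β, a ^ γ * b ^ δ⁆
      = a ^ α * b ^ β * (a ^ γ * b ^ δ) * (a ^ γ * b ^ δ * (a ^ α * b ^ β))⁻¹ := by
        rw [commutatorElement_def]; group
    _ = a ^ (α + γ * r ^ β) * a ^ (-(γ + α * r ^ δ)) := by
        rw [zpow_mul_pow_mul_zpow_mul_pow h, zpow_mul_pow_mul_zpow_mul_pow h, add_comm δ,
          zpow_neg]
        group
    _ = a ^ (α * (1 - r ^ δ) - γ * (1 - r ^ β)) := by
        rw [← zpow_add]; ring_nf

theorem commutatorElement_zpow_zpow_mul_pow (h : b * a * b⁻¹ = a ^ r) (m γ : ℤ) (δ : ℕ) :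
    ⁅a ^ m, a ^ γ * b ^ δ⁆ = a ^ (m * (1 - r ^ δ)) := by
  simpa using commutatorElement_zpow_mul_pow h m γ 0 δ

theorem leftNormedCommutator_map_range_eq_zpow (h : b * a * b⁻¹ = a ^ r) (α : ℕ → ℤ)
    (β : ℕ → ℕ) {ℓ : ℕ} (hℓ : 2 ≤ ℓ) :
    leftNormedCommutator ((List.range ℓ).map fun i => a ^ α i * b ^ β i)
      = a ^ ((α 0 * (1 - r ^ β 1) - α 1 * (1 - r ^ β 0)) *
          ∏ i ∈ Finset.Ico 2 ℓ, (1 - r ^ β i)) := by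
  induction ℓ, hℓ using Nat.le_induction with
  | base =>
    simpa [leftNormedCommutator, List.range_succ] using commutatorElement_zpow_mul_pow h _ _ _ _
  | succ n hn ih =>
    have hne : (List.range n).map (fun i => a ^ α i * b ^ β i) ≠ [] := by
      simp only [ne_eq, List.map_eq_nil_iff, List.range_eq_nil]; omega
    rw [List.range_succ, List.map_append, List.map_singleton,
      leftNormedCommutator_append_singleton hne, ih, commutatorElement_zpow_zpow_mul_pow h,
      Finset.prod_Ico_succ_top hn, mul_assoc]

end

/-- If `b a b⁻¹ = a^r`, then for `ℓ ≥ 3`,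
`[a^α₁ b^β₁, …, a^α_ℓ b^β_ℓ]
  = a^((α₁(1 − r^β₂) − α₂(1 − r^β₁))·(1 − r^β₃)⋯(1 − r^β_ℓ))`
(indices shifted to start at `0`). -/
theorem leftNormedCommutator_eq_of_conj_pow
    {G : Type*} [Group G] (a b : G) (r : ℤ) (h : b * a * b⁻¹ = a ^ r)
    (ℓ : ℕ) (hℓ : 3 ≤ ℓ) (α : ℕ → ℤ) (β : ℕ → ℕ) :
    leftNormedCommutator ((List.range ℓ).map fun i => a ^ α i * b ^ β i)
      = a ^ ((α 0 * (1 - r ^ β 1) - α 1 * (1 - r ^ β 0)) *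
          ∏ i ∈ Finset.Ico 2 ℓ, (1 - r ^ β i)) :=
  leftNormedCommutator_map_range_eq_zpow h α β (by omega)
end

section
/- Let p be a prime, n ≥ 2, and let G be a group with a, b ∈ G satisfying a^{p^n} = 1 and b a b^{-1} = a^{1 + p^{n−1}}. Then for all integers α_1, α_2 and all natural numbers β_1, β_2, one has [a^{α_1} b^{β_1}, a^{α_2} b^{β_2}] = a^{p^{n−1}(α_2 β_1 − α_1 β_2)}. -/
open scoped commutatorElement

/-!
With `q = p^(n-1)`, the relation says `b a b⁻¹ = a^(1+q)`, and `a^(q^2) = 1` because `2(n-1) ≥ n`.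
Hence conjugation by `b^β` raises `a^α` to the power `1 + βq`, i.e. `b^β a^α = a^α a^(αβq) b^β`
with the correction `a^(αβq)` central. Moving all powers of `a` to the left in the commutator
leaves only these corrections, which add up to `a^(q(α₂β₁ - α₁β₂))`.
-/

section ConjPow

variable {G : Type*} [Group G] {a b : G} {q : ℤ}

theorem conj_zpow_of_conj_eq_zpow (h : b * a * b⁻¹ = a ^ (1 + q)) (α : ℤ) :
    b * a ^ α * b⁻¹ = a ^ (α * (1 + q)) := by
  rw [← conj_zpow, h, ← zpow_mul, mul_comm]

theorem pow_conj_zpow_of_conj_eq_zpow (h : b * a * b⁻¹ = a ^ (1 + q))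
    (hq : a ^ (q * q) = 1) (β : ℕ) (α : ℤ) :
    b ^ β * a ^ α * (b ^ β)⁻¹ = a ^ (α * (1 + β * q)) := by
  induction β generalizing α with
  | zero => simp
  | succ k ih =>
    calc b ^ (k + 1) * a ^ α * (b ^ (k + 1))⁻¹
        = b * (b ^ k * a ^ α * (b ^ k)⁻¹) * b⁻¹ := by group
      _ = a ^ (α * (1 + k * q) * (1 + q)) := by rw [ih, conj_zpow_of_conj_eq_zpow h]
      _ = a ^ (α * (1 + (k + 1 : ℕ) * q)) := by
        rw [show α * (1 + k * q) * (1 + q) = α * (1 + (k + 1 : ℕ) * q) + q * q * (α * k) by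
            push_cast; ring,
          zpow_add, zpow_mul a (q * q), hq, one_zpow, mul_one]

theorem pow_mul_zpow_mul_of_conj_eq_zpow (h : b * a * b⁻¹ = a ^ (1 + q))
    (hq : a ^ (q * q) = 1) (β : ℕ) (α : ℤ) (x : G) :
    b ^ β * (a ^ α * x) = a ^ (α * (1 + β * q)) * (b ^ β * x) := by
  rw [← pow_conj_zpow_of_conj_eq_zpow h hq, mul_assoc, mul_assoc, inv_mul_cancel_left,
    ← mul_assoc]

theorem commutatorElement_zpow_mul_pow_of_conj_eq_zpow (h : b * a * b⁻¹ = a ^ (1 + q))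
    (hq : a ^ (q * q) = 1) (α₁ α₂ : ℤ) (β₁ β₂ : ℕ) :
    ⁅a ^ α₁ * b ^ β₁, a ^ α₂ * b ^ β₂⁆ = a ^ (q * (α₂ * β₁ - α₁ * β₂)) := by
  have hbb : ∀ (γ₁ γ₂ : ℕ) (x : G), b ^ γ₁ * (b ^ γ₂ * ((b ^ γ₁)⁻¹ * x)) = b ^ γ₂ * x := by
    intro γ₁ γ₂ x
    rw [← mul_assoc, ← mul_assoc, pow_mul_comm, mul_assoc, mul_assoc, mul_inv_cancel_left]
  rw [commutatorElement_def, mul_inv_rev, mul_inv_rev, ← zpow_neg, ← zpow_neg]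
  simp only [mul_assoc, pow_mul_zpow_mul_of_conj_eq_zpow h hq, hbb, mul_inv_cancel_left,
    ← zpow_add]
  congr 1
  ring

end ConjPow

theorem commutator_class_two_metacyclic_general
    {p : ℕ} {G : Type*} [Group G] (a b : G) (n : ℕ) (hn : 2 ≤ n)
    (ha : a ^ p ^ n = 1) (h : b * a * b⁻¹ = a ^ (1 + p ^ (n - 1)))
    (α₁ α₂ : ℤ) (β₁ β₂ : ℕ) :
    ⁅a ^ α₁ * b ^ β₁, a ^ α₂ * b ^ β₂⁆
      = a ^ ((p : ℤ) ^ (n - 1) * (α₂ * (β₁ : ℤ) - α₁ * (β₂ : ℤ))) := by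
  have h' : b * a * b⁻¹ = a ^ (1 + (p : ℤ) ^ (n - 1)) := by exact_mod_cast h
  have hq : a ^ ((p : ℤ) ^ (n - 1) * (p : ℤ) ^ (n - 1)) = 1 := by
    have ha' : a ^ ((p : ℤ) ^ n) = 1 := by exact_mod_cast ha
    rw [← pow_add, show n - 1 + (n - 1) = n - 2 + n by omega, pow_add, mul_comm, zpow_mul,
      ha', one_zpow]
  exact commutatorElement_zpow_mul_pow_of_conj_eq_zpow h' hq α₁ α₂ β₁ β₂

/-- Let `p` be a prime, `n ≥ 2`, and suppose `a^(p^n) = 1` and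
`b a b⁻¹ = a^(1 + p^{n−1})`. Then
`[a^α₁ b^β₁, a^α₂ b^β₂] = a^(p^{n−1}(α₂β₁ − α₁β₂))`. -/
theorem commutator_class_two_metacyclic
    {p : ℕ} (hp : p.Prime) {G : Type*} [Group G] (a b : G) (n : ℕ) (hn : 2 ≤ n)
    (ha : a ^ p ^ n = 1) (h : b * a * b⁻¹ = a ^ (1 + p ^ (n - 1)))
    (α₁ α₂ : ℤ) (β₁ β₂ : ℕ) :
    ⁅a ^ α₁ * b ^ β₁, a ^ α₂ * b ^ β₂⁆
      = a ^ ((p : ℤ) ^ (n - 1) * (α₂ * (β₁ : ℤ) - α₁ * (β₂ : ℤ))) :=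
  commutator_class_two_metacyclic_general a b n hn ha h α₁ α₂ β₁ β₂
end

section
/- Let G be a finite abelian group. Then G satisfies the Amit–Ashurst conjecture: for every word w in k variables and every g ∈ G_w, P_{w,G}(g) ≥ 1/|G|, i.e., N_{w,G}(g)·|G| ≥ |G|^k. -/
/-- Every finite abelian group satisfies the Amit–Ashurst
conjecture: for every word `w` in `k` variables and every `g ∈ G_w`,
`P_{w,G}(g) ≥ 1/|G|`, i.e. `N_{w,G}(g) · |G| ≥ |G|^k`. -/
theorem amit_ashurst_of_finite_abelian
    {G : Type*} [CommGroup G] [Finite G]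
    (k : ℕ) (w : FreeGroup (Fin k)) (g : G)
    (hg : ∃ v : Fin k → G, (FreeGroup.lift v) w = g) :
    Nat.card {v : Fin k → G // (FreeGroup.lift v) w = g} * Nat.card G
      ≥ Nat.card G ^ k := by
  obtain ⟨v₀, hv₀⟩ := hg
  -- the word map as a group homomorphism (uses commutativity)
  have hmul : ∀ u v : Fin k → G,
      FreeGroup.lift (u * v) w = FreeGroup.lift u w * FreeGroup.lift v w := by
    intro u v
    have : FreeGroup.lift (u * v) = (FreeGroup.lift u) * (FreeGroup.lift v) := by
      apply FreeGroup.ext_hom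
      intro a
      simp
    rw [this]; rfl
  have hone : FreeGroup.lift (1 : Fin k → G) w = 1 := by
    have : FreeGroup.lift (1 : Fin k → G) = 1 := by
      apply FreeGroup.ext_hom
      intro a
      simp
    rw [this]; rfl
  let φ : (Fin k → G) →* G :=
    { toFun := fun v => FreeGroup.lift v w
      map_one' := hone
      map_mul' := hmul }
  have hφ : ∀ v, φ v = FreeGroup.lift v w := fun _ => rfl
  -- fiber over g is in bijection with the kernel
  have e : {v : Fin k → G // (FreeGroup.lift v) w = g} ≃ φ.ker :=
    { toFun := fun v => ⟨v₀⁻¹ * v.1, by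
        have := v.2
        rw [MonoidHom.mem_ker, map_mul, map_inv, hφ, hφ, hv₀, this, inv_mul_cancel]⟩
      invFun := fun u => ⟨v₀ * u.1, by
        have := u.2
        rw [MonoidHom.mem_ker] at this
        have h2 : φ (v₀ * u.1) = g := by
          rw [map_mul, this, mul_one, hφ, hv₀]
        simpa [hφ] using h2⟩
      left_inv := fun v => by ext; simp
      right_inv := fun u => by ext; simp }
  have hcard : Nat.card {v : Fin k → G // (FreeGroup.lift v) w = g}
      = Nat.card φ.ker := Nat.card_congr e
  have hquot : Nat.card (Fin k → G)
      = Nat.card ((Fin k → G) ⧸ φ.ker) * Nat.card φ.ker :=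
    Subgroup.card_eq_card_quotient_mul_card_subgroup φ.ker
  have hrange : Nat.card ((Fin k → G) ⧸ φ.ker) = Nat.card φ.range :=
    Nat.card_congr (QuotientGroup.quotientKerEquivRange φ).toEquiv
  have hle : Nat.card φ.range ≤ Nat.card G := Subgroup.card_le_card_group _
  have hpow : Nat.card (Fin k → G) = Nat.card G ^ k := by
    simp [Nat.card_fun]
  calc Nat.card G ^ k = Nat.card ((Fin k → G) ⧸ φ.ker) * Nat.card φ.ker := by
        rw [← hpow, hquot]
    _ = Nat.card φ.range * Nat.card φ.ker := by rw [hrange]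
    _ ≤ Nat.card G * Nat.card φ.ker := Nat.mul_le_mul_right _ hle
    _ = Nat.card {v : Fin k → G // (FreeGroup.lift v) w = g} * Nat.card G := by
        rw [hcard, Nat.mul_comm]
end
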